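/- Delete-free planning is equivalent to the following graph problem: given a directed bipartite graph G=(X,Y,E) with goal set Y_F ⊆ Y, a subgraph G*=(X*,Y*,E*) satisfying (1) Y_F ⊆ Y*, (2) if x ∈ X* and (y,x) ∈ E then y ∈ Y* and (y,x) ∈ E*, (3) every y ∈ Y* has at least one incoming edge (x,y) ∈ E* with x ∈ X*, and G* acyclic, exists iff the corresponding delete-free planning problem (X actions, Y non-initial fluents, (x,y) edges add-effects, (y,x) edges preconditions, goals Y_F) has a solution; specifically, from any such acyclic subgraph a valid sequential plan can be extracted by topological ordering of X*. -/

import Mathlib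

structure Strips (F A : Type) where
  init : Set F
  goal : Set F
  pre : A → Set F
  add : A → Set F
  del : A → Set F
  cost : A → ℕ

def Strips.step {F A : Type} (Q : Strips F A) (s : Set F) (a : A) : Set F :=
  (s \ Q.del a) ∪ Q.add a

def Strips.run {F A : Type} (Q : Strips F A) (s : Set F) (p : List A) : Set F :=
  p.foldl Q.step s

def Strips.ValidFrom {F A : Type} (Q : Strips F A) : Set F → List A → Prop
  | _, [] => True
  | s, a :: p => Q.pre a ⊆ s ∧ Q.ValidFrom (Q.step s a) p

def Strips.Solves {F A : Type} (Q : Strips F A) (p : List A) : Prop :=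
  Q.ValidFrom Q.init p ∧ Q.goal ⊆ Q.run Q.init p

def Strips.planCost {F A : Type} (Q : Strips F A) (p : List A) : ℕ :=
  (p.map Q.cost).sum

/-- The layered make-progress rule: in the induced state sequence, no state at a
later index is a subset of a state at an earlier index. -/
def Strips.MakesProgress {F A : Type} (Q : Strips F A) (s : Set F) (p : List A) : Prop :=
  ∀ i j : ℕ, i < j → j ≤ p.length → ¬ Q.run s (p.take j) ⊆ Q.run s (p.take i)

/-- The delete-free relaxation: all delete-effects removed. -/
def Strips.relax {F A : Type} (Q : Strips F A) : Strips F A :=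
  { Q with del := fun _ => ∅ }

/-- A directed bipartite graph: \`X\` actions, \`Y\` (non-initial) fluents; edges
\`(x,y)\` are add-effects (\`addE\`), edges \`(y,x)\` are preconditions (\`preE\`),
with weights on \`X\` and a goal set \`Y_F ⊆ Y\`. -/
structure DFGraph (X Y : Type) where
  addE : X → Y → Prop
  preE : Y → X → Prop
  w : X → ℕ
  goalY : Set Y

/-- The delete-free planning problem corresponding to a graph: actions \`X\`, fluents
\`Y\` with empty initial state, preconditions the \`(y,x)\` edges, add-effects the
\`(x,y)\` edges, no delete-effects, goals \`Y_F\`. -/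
def DFGraph.toStrips {X Y : Type} (G : DFGraph X Y) : Strips Y X where
  init := ∅
  goal := G.goalY
  pre := fun x => {y | G.preE y x}
  add := fun x => {y | G.addE x y}
  del := fun _ => ∅
  cost := G.w

/-- One-step edge relation of a subgraph, on the disjoint union of actions and
fluents. -/
def DFGraph.SubStep {X Y : Type} (_ : DFGraph X Y)
    (EaddS : X → Y → Prop) (EpreS : Y → X → Prop) : X ⊕ Y → X ⊕ Y → Prop
  | Sum.inl x, Sum.inr y => EaddS x y
  | Sum.inr y, Sum.inl x => EpreS y x
  | _, _ => False

/-- A subgraph \`G* = (X*, Y*, E*)\` of \`G\` satisfying: (1) the goals lie in \`Y*\`;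
(2) if \`x ∈ X*\` and \`(y,x) ∈ E\` then \`y ∈ Y*\` and \`(y,x) ∈ E*\`; (3) every
\`y ∈ Y*\` has an incoming edge \`(x,y) ∈ E*\` with \`x ∈ X*\`; and \`G*\` acyclic. -/
structure DFGraph.GoodSub {X Y : Type} (G : DFGraph X Y) where
  Xs : Set X
  Ys : Set Y
  EaddS : X → Y → Prop
  EpreS : Y → X → Prop
  addS_sub : ∀ x y, EaddS x y → G.addE x y ∧ x ∈ Xs ∧ y ∈ Ys
  preS_sub : ∀ y x, EpreS y x → G.preE y x ∧ x ∈ Xs ∧ y ∈ Ys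
  goal_sub : G.goalY ⊆ Ys
  pre_closed : ∀ x ∈ Xs, ∀ y, G.preE y x → y ∈ Ys ∧ EpreS y x
  caused : ∀ y ∈ Ys, ∃ x, EaddS x y
  acyclic : ∀ v : X ⊕ Y, ¬ Relation.TransGen (G.SubStep EaddS EpreS) v v

/-!
A solution of the delete-free problem yields an acyclic justification graph: keep the actions of
the plan, the fluents it adds, every precondition edge of a used action, and for each fluent only
the edge from the action that adds it first. Ranking an action by its first position `n` as `2n`
and a fluent by the first position adding it as `2n + 1` makes every edge increase the rank.

Conversely, in a good subgraph every fluent of `Y*` is reachable, by well-founded induction along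
the (finite, acyclic) subgraph: to reach `y`, reach all preconditions of an action supporting `y`,
concatenate the plans, and append that action. Deletions are absent, so concatenated plans stay
applicable and keep everything they achieved.
-/

theorem Relation.TransGen.lt_of_rank {α : Type*} {r : α → α → Prop} (f : α → ℕ)
    (hf : ∀ a b, r a b → f a < f b) {a b : α} (h : Relation.TransGen r a b) : f a < f b := by
  induction h with
  | single h => exact hf _ _ h
  | tail _ h ih => exact ih.trans (hf _ _ h)

namespace Strips

variable {F A : Type} (Q : Strips F A)

theorem step_mono {s t : Set F} (h : s ⊆ t) (a : A) : Q.step s a ⊆ Q.step t a :=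
  Set.union_subset_union (Set.sdiff_subset_sdiff_left h) subset_rfl

theorem ValidFrom.mono {Q : Strips F A} :
    ∀ {p : List A} {s t : Set F}, Q.ValidFrom s p → s ⊆ t → Q.ValidFrom t p
  | [], _, _, _, _ => trivial
  | _ :: _, _, _, ⟨hpre, hp⟩, hst => ⟨hpre.trans hst, hp.mono (Q.step_mono hst _)⟩

theorem validFrom_append :
    ∀ (p q : List A) (s : Set F),
      Q.ValidFrom s (p ++ q) ↔ Q.ValidFrom s p ∧ Q.ValidFrom (Q.run s p) q
  | [], _, _ => by simp [ValidFrom, run]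
  | _ :: p, q, s => by simp [ValidFrom, validFrom_append p q, run, and_assoc]

theorem ValidFrom.pre_subset_run_take {Q : Strips F A} :
    ∀ {p : List A} {s : Set F} {i : ℕ} {a : A},
      Q.ValidFrom s p → p[i]? = some a → Q.pre a ⊆ Q.run s (p.take i)
  | _ :: _, _, 0, _, ⟨hpre, _⟩, rfl => hpre
  | _ :: _, _, _ + 1, _, ⟨_, hp⟩, ha => hp.pre_subset_run_take ha

end Strips

namespace DFGraph

variable {X Y : Type} (G : DFGraph X Y)

theorem mem_run_iff (s : Set Y) (p : List X) (y : Y) :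
    y ∈ G.toStrips.run s p ↔ y ∈ s ∨ ∃ x ∈ p, G.addE x y := by
  induction p generalizing s with
  | nil => simp [Strips.run]
  | cons a p ih =>
    show y ∈ G.toStrips.run (G.toStrips.step s a) p ↔ _
    rw [ih]
    simp [Strips.step, toStrips, or_assoc]

theorem mem_run_empty_iff (p : List X) (y : Y) :
    y ∈ G.toStrips.run ∅ p ↔ ∃ x ∈ p, G.addE x y := by
  simp [mem_run_iff]

theorem run_empty_append (p q : List X) :
    G.toStrips.run ∅ (p ++ q) = G.toStrips.run ∅ p ∪ G.toStrips.run ∅ q := by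
  ext y
  simp [mem_run_empty_iff, or_and_right, exists_or]

def Reaches (T : Set Y) : Prop :=
  ∃ p : List X, G.toStrips.ValidFrom ∅ p ∧ T ⊆ G.toStrips.run ∅ p

variable {G}

theorem Reaches.union {S T : Set Y} (hS : G.Reaches S) (hT : G.Reaches T) :
    G.Reaches (S ∪ T) := by
  obtain ⟨p, hp, hSp⟩ := hS
  obtain ⟨q, hq, hTq⟩ := hT
  refine ⟨p ++ q, (G.toStrips.validFrom_append p q ∅).2 ⟨hp, hq.mono (Set.empty_subset _)⟩, ?_⟩
  rw [run_empty_append]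
  exact Set.union_subset_union hSp hTq

theorem reaches_of_finite {T : Set Y} (hT : T.Finite) (h : ∀ y ∈ T, G.Reaches {y}) :
    G.Reaches T := by
  induction T, hT using Set.Finite.induction_on with
  | empty => exact ⟨[], trivial, Set.empty_subset _⟩
  | @insert a T _ _ ih =>
    rw [Set.insert_eq]
    exact (h a (Set.mem_insert a T)).union (ih fun y hy => h y (Set.mem_insert_of_mem a hy))

theorem Reaches.of_addE {x : X} {y : Y} (hpre : G.Reaches {z | G.preE z x})
    (hadd : G.addE x y) : G.Reaches {y} := by
  obtain ⟨p, hp, hpre⟩ := hpre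
  refine ⟨p ++ [x], (G.toStrips.validFrom_append p [x] ∅).2 ⟨hp, hpre, trivial⟩, ?_⟩
  rw [Set.singleton_subset_iff, mem_run_empty_iff]
  exact ⟨x, List.mem_append_right p (List.mem_singleton_self x), hadd⟩

namespace GoodSub

def Precedes (S : G.GoodSub) (z y : Y) : Prop :=
  Relation.TransGen (G.SubStep S.EaddS S.EpreS) (.inr z) (.inr y)

theorem wellFounded_precedes [Finite Y] (S : G.GoodSub) : WellFounded S.Precedes :=
  haveI : IsTrans Y S.Precedes := ⟨fun _ _ _ => Relation.TransGen.trans⟩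
  haveI : Std.Irrefl S.Precedes := ⟨fun y => S.acyclic (.inr y)⟩
  Finite.wellFounded_of_trans_of_irrefl _

theorem reaches_of_mem [Finite Y] (S : G.GoodSub) {y : Y} (hy : y ∈ S.Ys) : G.Reaches {y} := by
  induction y using S.wellFounded_precedes.induction with
  | _ y ih =>
    obtain ⟨x, hxy⟩ := S.caused y hy
    obtain ⟨hadd, hx, -⟩ := S.addS_sub x y hxy
    refine Reaches.of_addE (reaches_of_finite (Set.toFinite _) fun z hz => ?_) hadd
    obtain ⟨hz, hzx⟩ := S.pre_closed x hx z hz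
    exact ih z (.head (show G.SubStep _ _ (.inr z) (.inl x) from hzx) (.single hxy)) hz

theorem reaches_goal [Finite Y] (S : G.GoodSub) : G.Reaches G.goalY :=
  reaches_of_finite (Set.toFinite _) fun _ hy => S.reaches_of_mem (S.goal_sub hy)

end GoodSub

variable (G)

def addIndices (p : List X) (y : Y) : Set ℕ :=
  {n | ∃ x, p[n]? = some x ∧ G.addE x y}

theorem addIndices_nonempty_iff (p : List X) (y : Y) :
    (G.addIndices p y).Nonempty ↔ y ∈ G.toStrips.run ∅ p := by
  simp only [mem_run_empty_iff, List.mem_iff_getElem?, addIndices, Set.Nonempty, Set.mem_ofPred_eq]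
  exact ⟨fun ⟨n, x, hx, h⟩ => ⟨x, ⟨n, hx⟩, h⟩, fun ⟨x, ⟨n, hx⟩, h⟩ => ⟨n, x, hx, h⟩⟩

theorem addIndices_take (p : List X) (i : ℕ) (y : Y) :
    G.addIndices (p.take i) y = G.addIndices p y ∩ Set.Iio i := by
  ext n
  by_cases hn : n < i <;> simp [addIndices, List.getElem?_take, hn]

noncomputable def planRank (p : List X) : X ⊕ Y → ℕ :=
  Sum.elim (fun x => 2 * sInf {n | p[n]? = some x}) (fun y => 2 * sInf (G.addIndices p y) + 1)

def FirstAdds (p : List X) (x : X) (y : Y) : Prop :=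
  (G.addIndices p y).Nonempty ∧ p[sInf (G.addIndices p y)]? = some x

def PlanPre (p : List X) (y : Y) (x : X) : Prop :=
  G.preE y x ∧ x ∈ p

variable {G}

theorem exists_addIndices_lt {p : List X} (hp : G.toStrips.ValidFrom ∅ p) {i : ℕ} {x : X}
    (hx : p[i]? = some x) {y : Y} (hy : G.preE y x) : ∃ n ∈ G.addIndices p y, n < i := by
  have hrun := hp.pre_subset_run_take hx hy
  rwa [← addIndices_nonempty_iff, addIndices_take] at hrun

theorem addIndices_nonempty_of_preE {p : List X} (hp : G.toStrips.ValidFrom ∅ p) {x : X}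
    (hx : x ∈ p) {y : Y} (hy : G.preE y x) : (G.addIndices p y).Nonempty :=
  let ⟨_, hi⟩ := List.mem_iff_getElem?.1 hx
  let ⟨n, hn, _⟩ := exists_addIndices_lt hp hi hy
  ⟨n, hn⟩

theorem subStep_rank_lt {p : List X} (hp : G.toStrips.ValidFrom ∅ p) :
    ∀ u v, G.SubStep (G.FirstAdds p) (G.PlanPre p) u v →
      G.planRank p u < G.planRank p v
  | .inl _, .inr _, ⟨_, hx⟩ => by
    have := Nat.sInf_le (s := {n | p[n]? = some _}) hx
    simp only [planRank, Sum.elim_inl, Sum.elim_inr]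
    omega
  | .inr y, .inl x, ⟨hy, hx⟩ => by
    have hfirst := Nat.sInf_mem (s := {n | p[n]? = some x}) (List.mem_iff_getElem?.1 hx)
    obtain ⟨n, hn, hlt⟩ := exists_addIndices_lt hp hfirst hy
    have := Nat.sInf_le hn
    simp only [planRank, Sum.elim_inl, Sum.elim_inr]
    omega

def GoodSub.ofSolves {p : List X} (hp : G.toStrips.Solves p) : G.GoodSub where
  Xs := {x | x ∈ p}
  Ys := {y | (G.addIndices p y).Nonempty}
  EaddS := G.FirstAdds p
  EpreS := G.PlanPre p
  addS_sub x y := fun ⟨hy, hx⟩ => by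
    obtain ⟨x', hx', hadd⟩ := Nat.sInf_mem hy
    obtain rfl : x = x' := Option.some.inj (hx.symm.trans hx')
    exact ⟨hadd, List.mem_of_getElem? hx, hy⟩
  preS_sub y x := fun ⟨hy, hx⟩ => ⟨hy, hx, addIndices_nonempty_of_preE hp.1 hx hy⟩
  goal_sub _ hy := (G.addIndices_nonempty_iff p _).2 (hp.2 hy)
  pre_closed x hx y hy := ⟨addIndices_nonempty_of_preE hp.1 hx hy, hy, hx⟩
  caused y hy :=
    let ⟨x, hx, _⟩ := Nat.sInf_mem hy
    ⟨x, hy, hx⟩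
  acyclic v hv := lt_irrefl _ (hv.lt_of_rank _ (subStep_rank_lt hp.1))

end DFGraph

theorem dfGraph_iff_plan_general {X Y : Type} [Fintype Y] (G : DFGraph X Y) :
    Nonempty G.GoodSub ↔ ∃ p : List X, G.toStrips.Solves p :=
  ⟨fun ⟨S⟩ => S.reaches_goal, fun ⟨_, hp⟩ => ⟨.ofSolves hp⟩⟩

/-- Delete-free planning is equivalent to the graph problem: an acyclic subgraph
satisfying conditions (1)-(3) exists iff the corresponding delete-free planning
problem has a solution. -/
theorem dfGraph_iff_plan {X Y : Type} [Fintype X] [Fintype Y] (G : DFGraph X Y) :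
    Nonempty G.GoodSub ↔ ∃ p : List X, G.toStrips.Solves p :=
  dfGraph_iff_plan_general G
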